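/- arXiv:2505.13096 — 3 statements merged into one kernel-verified Lean document; each statement's English description precedes it below -/
import Mathlib

section
/- Let A be a quasi-coherent I-algebra. Then for any I-algebra B, the map sending an I-algebra homomorphism f : B → A to the function Spec A → Spec B given by x ↦ x ∘ f is a bijection between the set of I-algebra homomorphisms from B to A and the set of functions from Spec A to Spec B. -/
/-- The spectrum of an `I`-algebra `(A, φ)`: the set of `I`-algebra homomorphisms into `I`,
i.e. bounded lattice homomorphisms `A → I` commuting with the structure maps. -/
def Spec {I A : Type*} [DistribLattice I] [BoundedOrder I] [DistribLattice A] [BoundedOrder A]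
    (φ : BoundedLatticeHom I A) : Type _ :=
  {x : BoundedLatticeHom A I // ∀ i, x (φ i) = i}

/-- An `I`-algebra `(A, φ)` is quasi-coherent when the evaluation map
`ι_A : A → (Spec A → I)` is bijective. -/
def QuasiCoherent {I A : Type*} [DistribLattice I] [BoundedOrder I] [DistribLattice A]
    [BoundedOrder A] (φ : BoundedLatticeHom I A) : Prop :=
  Function.Bijective (fun (a : A) (x : Spec φ) => x.1 a)

/-- If `A` is a quasi-coherent `I`-algebra, then for any `I`-algebra `B`, precomposition
`f ↦ (x ↦ x ∘ f)` is a bijection between `I`-algebra homomorphisms `B → A` and functions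
`Spec A → Spec B`. -/
theorem statement1 {I : Type*} [DistribLattice I] [BoundedOrder I]
    {A : Type*} [DistribLattice A] [BoundedOrder A] {φ : BoundedLatticeHom I A}
    (hA : QuasiCoherent φ)
    {B : Type*} [DistribLattice B] [BoundedOrder B] (ψ : BoundedLatticeHom I B) :
    Function.Bijective
      (fun (f : {f : BoundedLatticeHom B A // ∀ i, f (ψ i) = φ i}) (x : Spec φ) =>
        (⟨x.1.comp f.1, fun i => by
          rw [BoundedLatticeHom.comp_apply, f.2 i]; exact x.2 i⟩ : Spec ψ)) := by
  obtain ⟨hinj, hsurj⟩ := hA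
  constructor
  · intro f1 f2 h
    apply Subtype.ext
    apply BoundedLatticeHom.ext
    intro b
    apply hinj
    funext x
    have h' := congrFun h x
    rw [Subtype.mk.injEq] at h'
    exact DFunLike.congr_fun h' b
  · intro g
    choose f hf using fun b => hsurj (fun x => (g x).1 b)
    have key : ∀ b x, x.1 (f b) = (g x).1 b := fun b x => congrFun (hf b) x
    have hsup : ∀ b c, f (b ⊔ c) = f b ⊔ f c := by
      intro b c
      apply hinj
      funext x
      show x.1 (f (b ⊔ c)) = x.1 (f b ⊔ f c)
      simp [key, map_sup]
    have hinf : ∀ b c, f (b ⊓ c) = f b ⊓ f c := by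
      intro b c
      apply hinj
      funext x
      show x.1 (f (b ⊓ c)) = x.1 (f b ⊓ f c)
      simp [key, map_inf]
    have htop : f ⊤ = ⊤ := by
      apply hinj
      funext x
      show x.1 (f ⊤) = x.1 ⊤
      simp [key]
    have hbot : f ⊥ = ⊥ := by
      apply hinj
      funext x
      show x.1 (f ⊥) = x.1 ⊥
      simp [key]
    refine ⟨⟨⟨⟨⟨f, hsup⟩, hinf⟩, htop, hbot⟩, ?_⟩, ?_⟩
    · intro i
      apply hinj
      funext x
      show x.1 (f (ψ i)) = x.1 (φ i)
      rw [key, (g x).2 i, x.2 i]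
    · funext x
      apply Subtype.ext
      apply BoundedLatticeHom.ext
      intro b
      exact key b x
end

section
/- Assume I is non-trivial, i.e., (⊥ : I) ≠ ⊤, and let A be a quasi-coherent I-algebra. Then Spec A is empty if and only if A is trivial, i.e., (⊥ : A) = ⊤. -/
/-- (Weak Nullstellensatz) If `I` is non-trivial and `A` is a quasi-coherent `I`-algebra,
then `Spec A` is empty if and only if `A` is trivial. -/
theorem statement8 {I : Type*} [DistribLattice I] [BoundedOrder I] (hI : (⊥ : I) ≠ ⊤)
    {A : Type*} [DistribLattice A] [BoundedOrder A] {φ : BoundedLatticeHom I A}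
    (hA : QuasiCoherent φ) :
    IsEmpty (Spec φ) ↔ (⊥ : A) = ⊤ := by
  constructor
  · intro h
    apply hA.injective
    funext x
    exact h.elim x
  · intro h
    constructor
    intro x
    apply hI
    have h1 : x.1 ⊥ = x.1 ⊤ := by rw [h]
    simpa using h1
end

section
/- Scott's graph model G, the powerset of ℕ ordered by inclusion, is the free ω-cpo on the poset of finite subsets of ℕ: the restriction map sending an ω-continuous function f : Set ℕ → Set ℕ (i.e., f is monotone and preserves suprema (unions) of monotone sequences ℕ → Set ℕ) to the monotone map Finset ℕ → Set ℕ given by F ↦ f ↑F, is a bijection between the set of ω-continuous self-maps of Set ℕ and the set of monotone maps from Finset ℕ (ordered by inclusion) to Set ℕ. -/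
open Classical in
/-- The n-th finite approximation of a set `A : Set ℕ`. -/
noncomputable def approx (A : Set ℕ) (n : ℕ) : Finset ℕ :=
  (Finset.range n).filter (· ∈ A)

lemma approx_coe (A : Set ℕ) (n : ℕ) : (↑(approx A n) : Set ℕ) = A ∩ {k | k < n} := by
  classical
  ext k
  simp [approx, Set.mem_setOf_eq, and_comm]

lemma approx_mono (A : Set ℕ) : Monotone (fun n => (↑(approx A n) : Set ℕ)) := by
  intro m n h
  simp only [approx_coe]
  exact Set.inter_subset_inter_right _ (fun k hk => lt_of_lt_of_le hk h)

lemma approx_iUnion (A : Set ℕ) : (⋃ n, (↑(approx A n) : Set ℕ)) = A := by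
  ext k
  simp only [Set.mem_iUnion, approx_coe, Set.mem_inter_iff, Set.mem_setOf_eq]
  constructor
  · rintro ⟨n, hA, _⟩; exact hA
  · intro hA; exact ⟨k + 1, hA, Nat.lt_succ_self k⟩

lemma cont_eq_iUnion_approx (f : Set ℕ → Set ℕ)
    (hc : ∀ c : ℕ → Set ℕ, Monotone c → f (⋃ n, c n) = ⋃ n, f (c n)) (A : Set ℕ) :
    f A = ⋃ n, f ↑(approx A n) := by
  conv_lhs => rw [← approx_iUnion A]
  exact hc _ (approx_mono A)

/-- Scott's graph model `G = Set ℕ` is the free ω-cpo on the poset `Finset ℕ` of finite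
subsets of `ℕ`: restriction along the inclusion `Finset ℕ → Set ℕ` is a bijection between
ω-continuous self-maps of `Set ℕ` and monotone maps `Finset ℕ → Set ℕ`. -/
theorem statement19 :
    Function.Bijective
      (fun (f : {f : Set ℕ → Set ℕ // Monotone f ∧
          ∀ c : ℕ → Set ℕ, Monotone c → f (⋃ n, c n) = ⋃ n, f (c n)}) =>
        (⟨fun F : Finset ℕ => f.1 ↑F,
          fun F G h => f.2.1 (Finset.coe_subset.mpr h)⟩ :
          {g : Finset ℕ → Set ℕ // Monotone g})) := by
  constructor
  · rintro ⟨f₁, hm₁, hc₁⟩ ⟨f₂, hm₂, hc₂⟩ h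
    have hF : ∀ F : Finset ℕ, f₁ ↑F = f₂ ↑F := fun F => congrFun (congrArg Subtype.val h) F
    ext A k
    show k ∈ f₁ A ↔ k ∈ f₂ A
    rw [cont_eq_iUnion_approx f₁ hc₁ A, cont_eq_iUnion_approx f₂ hc₂ A]
    simp only [hF]
  · rintro ⟨g, hg⟩
    refine ⟨⟨fun A => ⋃ (F : Finset ℕ) (_ : ↑F ⊆ A), g F, ?_, ?_⟩, ?_⟩
    · intro A B hAB
      exact Set.iUnion_mono fun F => Set.iUnion_mono' fun h => ⟨h.trans hAB, subset_rfl⟩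
    · intro c hc
      apply Set.Subset.antisymm
      · refine Set.iUnion_subset fun F => Set.iUnion_subset fun hF => ?_
        obtain ⟨I, Ifin, hI⟩ := Set.finite_subset_iUnion (F.finite_toSet) hF
        obtain ⟨N, hN⟩ : ∃ N : ℕ, ∀ i ∈ I, i ≤ N := by
          obtain ⟨s, hs⟩ := Ifin.exists_finset_coe
          exact ⟨s.sup id, fun i hi => Finset.le_sup (f := id) (by rw [← hs] at hi; exact hi)⟩
        have hFc : ↑F ⊆ c N := by
          intro k hk
          obtain ⟨i, hi, hki⟩ := Set.mem_iUnion₂.mp (hI hk)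
          exact hc (hN i hi) hki
        exact Set.subset_iUnion_of_subset N
          (Set.subset_iUnion₂_of_subset F hFc subset_rfl)
      · refine Set.iUnion_subset fun n => ?_
        refine Set.iUnion_subset fun F => Set.iUnion_subset fun hF => ?_
        exact Set.subset_iUnion₂_of_subset F (hF.trans (Set.subset_iUnion c n)) subset_rfl
    · apply Subtype.ext
      funext F
      apply Set.Subset.antisymm
      · exact Set.iUnion_subset fun F' => Set.iUnion_subset fun h =>
          hg (Finset.coe_subset.mp h)
      · exact Set.subset_iUnion₂_of_subset F subset_rfl subset_rfl
end
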